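/- arXiv:2102.13098 — 4 statements merged into one kernel-verified Lean document; each statement's English description precedes it below -/
import Mathlib

section
/- Fix a natural number t ≥ 1. Let Z_1, ..., Z_m be independent real-valued random variables such that for every i: (i) E[Z_i^ℓ] = 0 for every odd integer ℓ with 1 ≤ ℓ ≤ t, and (ii) E[|Z_i|^ℓ]^{1/ℓ} ≤ ℓ · σ_i for every integer 1 ≤ ℓ ≤ t, where σ_1, ..., σ_m are nonnegative reals. Then for every integer 1 ≤ ℓ ≤ t, E[(Z_1 + ··· + Z_m)^ℓ]^{1/ℓ} ≤ ℓ · (σ_1² + ··· + σ_m²)^{1/2}. -/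
/-!
By the multinomial theorem and independence, `E[(∑ i, Z i) ^ ℓ]` equals
`∑_α multinomial(α) ∏ i, E[Z i ^ α i]`, summed over `α` with `∑ α = ℓ`. A term with some odd
`α i` vanishes, so for odd `ℓ` the moment is `0`, and for `ℓ = 2k` only `α = 2β` survive. The
moment hypothesis gives `E[Z i ^ 2b] ≤ (2b)^(2b) (σ i ^ 2)^b`, and bounding one term of the
multinomial expansion of `(∑ a)^(∑ a)` gives `multinomial(2β) ∏ (2β i)^(2β i) ≤ (2k)^(2k)`.
What remains is the multinomial expansion of `(2k)^(2k) (∑ i, σ i ^ 2)^k`.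
-/

open MeasureTheory ProbabilityTheory Finset

theorem Nat.multinomial_mul_prod_pow_le {ι : Type*} (s : Finset ι) (a : ι → ℕ) :
    multinomial s a * ∏ i ∈ s, a i ^ a i ≤ (∑ i ∈ s, a i) ^ ∑ i ∈ s, a i := by
  classical
  set b : ι → ℕ := fun i => if i ∈ s then a i else 0
  have hb : b ∈ piAntidiag s (∑ i ∈ s, a i) := by
    refine mem_piAntidiag.2 ⟨sum_congr rfl fun i hi => if_pos hi, fun i hi => ?_⟩
    by_contra h
    exact hi (if_neg h)
  calc multinomial s a * ∏ i ∈ s, a i ^ a i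
      = multinomial s b * ∏ i ∈ s, a i ^ b i := by
        rw [multinomial_congr fun i hi => (if_pos hi).symm]
        exact congrArg _ (prod_congr rfl fun i hi => by simp only [b, if_pos hi])
    _ ≤ ∑ α ∈ piAntidiag s (∑ i ∈ s, a i), multinomial s α * ∏ i ∈ s, a i ^ α i :=
        single_le_sum (f := fun α => multinomial s α * ∏ i ∈ s, a i ^ α i)
          (fun _ _ => Nat.zero_le _) hb
    _ = _ := by simp [sum_pow_eq_sum_piAntidiag]

namespace Finset

section piAntidiag

variable {ι M : Type*} [DecidableEq ι] [AddCommMonoid M] {s : Finset ι} {g : (ι → ℕ) → M}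

theorem apply_le_of_mem_piAntidiag {n : ℕ} {α : ι → ℕ} (hα : α ∈ piAntidiag s n) (i : ι) :
    α i ≤ n := by
  rw [mem_piAntidiag] at hα
  by_cases hi : i ∈ s
  · exact hα.1 ▸ single_le_sum (fun _ _ => Nat.zero_le _) hi
  · rw [not_imp_comm.1 (hα.2 i) hi]
    exact Nat.zero_le n

theorem exists_odd_of_mem_piAntidiag {n : ℕ} {α : ι → ℕ} (hα : α ∈ piAntidiag s n)
    (hn : Odd n) : ∃ i ∈ s, Odd (α i) := by
  rw [mem_piAntidiag] at hα
  by_contra! h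
  exact Nat.not_even_iff_odd.2 hn (hα.1 ▸ even_sum _ fun i hi => Nat.not_odd_iff_even.1 (h i hi))

theorem sum_piAntidiag_eq_zero_of_odd {n : ℕ} (hn : Odd n)
    (hg : ∀ α ∈ piAntidiag s n, (∃ i ∈ s, Odd (α i)) → g α = 0) :
    ∑ α ∈ piAntidiag s n, g α = 0 :=
  sum_eq_zero fun α hα => hg α hα (exists_odd_of_mem_piAntidiag hα hn)

theorem sum_piAntidiag_two_mul (k : ℕ)
    (hg : ∀ α ∈ piAntidiag s (2 * k), (∃ i ∈ s, Odd (α i)) → g α = 0) :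
    ∑ α ∈ piAntidiag s (2 * k), g α = ∑ β ∈ piAntidiag s k, g (2 • β) := by
  rw [← sum_filter_of_ne (p := fun α => ∀ i ∈ s, 2 ∣ α i), ← map_nsmul_piAntidiag s k two_ne_zero,
    sum_map]
  · rfl
  intro α hα hne i hi
  by_contra h
  exact hne (hg α hα ⟨i, hi, Nat.odd_iff.2 (Nat.two_dvd_ne_zero.1 h)⟩)

end piAntidiag

theorem sum_multinomial_two_nsmul_mul_prod_le {ι : Type*} [DecidableEq ι] (s : Finset ι)
    (k : ℕ) (M : ι → ℕ → ℝ) (σ : ι → ℝ) (hM0 : ∀ i ∈ s, ∀ b, 0 ≤ M i (2 * b))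
    (hM : ∀ i ∈ s, ∀ b ≤ k, M i (2 * b) ≤ ((2 * b : ℕ) * σ i) ^ (2 * b)) :
    ∑ β ∈ piAntidiag s k, (Nat.multinomial s (2 • β) : ℝ) * ∏ i ∈ s, M i ((2 • β) i)
      ≤ ((2 * k : ℕ) : ℝ) ^ (2 * k) * (∑ i ∈ s, σ i ^ 2) ^ k := by
  rw [sum_pow_eq_sum_piAntidiag, mul_sum]
  refine sum_le_sum fun β hβ => ?_
  obtain ⟨hβsum, -⟩ := mem_piAntidiag.1 hβ
  have hcomb : (Nat.multinomial s (2 • β) : ℝ) * ∏ i ∈ s, ((2 * β i : ℕ) : ℝ) ^ (2 * β i)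
      ≤ ((2 * k : ℕ) : ℝ) ^ (2 * k) * Nat.multinomial s β := by
    have h := Nat.multinomial_mul_prod_pow_le s (2 • β)
    simp only [Pi.smul_apply, smul_eq_mul, ← mul_sum, hβsum] at h
    exact_mod_cast h.trans (Nat.le_mul_of_pos_right _ (Nat.multinomial_pos s β))
  simp only [Pi.smul_apply, smul_eq_mul]
  calc (Nat.multinomial s (2 • β) : ℝ) * ∏ i ∈ s, M i (2 * β i)
      ≤ Nat.multinomial s (2 • β) * ∏ i ∈ s, (((2 * β i : ℕ) : ℝ) * σ i) ^ (2 * β i) :=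
        mul_le_mul_of_nonneg_left (prod_le_prod (fun i hi => hM0 i hi _)
          fun i hi => hM i hi _ (apply_le_of_mem_piAntidiag hβ i)) (Nat.cast_nonneg _)
    _ = (Nat.multinomial s (2 • β) * ∏ i ∈ s, ((2 * β i : ℕ) : ℝ) ^ (2 * β i))
          * ∏ i ∈ s, (σ i ^ 2) ^ β i := by
        simp only [mul_pow, prod_mul_distrib, ← pow_mul, mul_assoc]
    _ ≤ ((2 * k : ℕ) : ℝ) ^ (2 * k) * Nat.multinomial s β * ∏ i ∈ s, (σ i ^ 2) ^ β i := by
        gcongr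
    _ = _ := by ring

end Finset

theorem Real.rpow_one_div_natCast_le_iff {x c : ℝ} {n : ℕ} (hx : 0 ≤ x) (hc : 0 ≤ c)
    (hn : n ≠ 0) : x ^ (1 / (n : ℝ)) ≤ c ↔ x ≤ c ^ n := by
  rw [one_div, Real.rpow_inv_le_iff_of_pos hx hc (by positivity), Real.rpow_natCast]

section Moments

variable {Ω : Type*} [MeasurableSpace Ω] {μ : Measure Ω} {X : Ω → ℝ}

theorem integrable_pow_of_integrable_abs_pow (hX : AEStronglyMeasurable X μ) {n : ℕ}
    (h : Integrable (fun ω => |X ω| ^ n) μ) : Integrable (fun ω => X ω ^ n) μ :=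
  (integrable_norm_iff (hX.pow n)).1 (by simpa only [Pi.pow_apply, Real.norm_eq_abs, abs_pow] using h)

theorem integral_pow_le_of_rpow_le {n : ℕ} (hn : Even n) (hn0 : n ≠ 0) {c : ℝ}
    (h : (∫ ω, |X ω| ^ n ∂μ) ^ (1 / (n : ℝ)) ≤ c) : ∫ ω, X ω ^ n ∂μ ≤ c ^ n := by
  have hI : 0 ≤ ∫ ω, |X ω| ^ n ∂μ := integral_nonneg fun ω => by positivity
  simp only [← fun ω => hn.pow_abs (X ω)]
  exact (Real.rpow_one_div_natCast_le_iff hI ((Real.rpow_nonneg hI _).trans h) hn0).1 h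

end Moments

namespace ProbabilityTheory

variable {Ω ι : Type*} [MeasurableSpace Ω] {μ : Measure Ω} {X : ι → Ω → ℝ}

theorem iIndepFun.integrable_fun_finsetProd (hX : iIndepFun X μ) (mX : ∀ i, Measurable (X i))
    (hint : ∀ i, Integrable (X i) μ) (s : Finset ι) :
    Integrable (fun ω => ∏ i ∈ s, X i ω) μ := by
  have := hX.isProbabilityMeasure
  induction s using Finset.cons_induction with
  | empty => simp
  | cons a s ha ih =>
    simp_rw [prod_cons]
    have hindep := (hX.indepFun_finsetProd_of_notMem mX ha).symm
    rw [← prod_fn] at ih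
    exact (hindep.integrable_mul (hint a) ih).congr (ae_of_all _ fun ω => by simp)

theorem iIndepFun.integral_sum_pow [Fintype ι] [DecidableEq ι] (hX : iIndepFun X μ)
    (mX : ∀ i, Measurable (X i)) (n : ℕ)
    (hint : ∀ i, ∀ k ≤ n, Integrable (fun ω => X i ω ^ k) μ) :
    ∫ ω, (∑ i, X i ω) ^ n ∂μ =
      ∑ α ∈ piAntidiag univ n, (Nat.multinomial univ α : ℝ) * ∏ i, ∫ ω, X i ω ^ α i ∂μ := by
  have hprod : ∀ α ∈ piAntidiag (univ : Finset ι) n, Integrable (fun ω => ∏ i, X i ω ^ α i) μ :=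
    fun α hα => (hX.comp (fun i x => x ^ α i) fun i => measurable_id.pow_const _)
      |>.integrable_fun_finsetProd (fun i => (mX i).pow_const _) (fun i => hint i _ (apply_le_of_mem_piAntidiag hα i)) univ
  simp_rw [sum_pow_eq_sum_piAntidiag (univ : Finset ι)]
  rw [integral_finsetSum _ fun α hα => (hprod α hα).const_mul _]
  refine sum_congr rfl fun α _ => ?_
  rw [integral_const_mul, hX.integral_fun_prod_comp (f := fun i x => x ^ α i)
    (fun i => (mX i).aemeasurable) fun i => (measurable_id.pow_const _).aestronglyMeasurable]

end ProbabilityTheory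

theorem sum_subexp_moment_bound_general
    {Ω : Type*} [MeasurableSpace Ω] (μ : Measure Ω) [IsProbabilityMeasure μ]
    (t m : ℕ)
    (Z : Fin m → Ω → ℝ) (σ : Fin m → ℝ)
    (hmeas : ∀ i, Measurable (Z i))
    (hindep : iIndepFun Z μ)
    (hint : ∀ i, ∀ ℓ : ℕ, 1 ≤ ℓ → ℓ ≤ t → Integrable (fun ω => |Z i ω| ^ ℓ) μ)
    (hodd : ∀ i, ∀ ℓ : ℕ, 1 ≤ ℓ → ℓ ≤ t → Odd ℓ → ∫ ω, (Z i ω) ^ ℓ ∂μ = 0)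
    (hmom : ∀ i, ∀ ℓ : ℕ, 1 ≤ ℓ → ℓ ≤ t →
      (∫ ω, |Z i ω| ^ ℓ ∂μ) ^ (1 / (ℓ : ℝ)) ≤ (ℓ : ℝ) * σ i) :
    ∀ ℓ : ℕ, 1 ≤ ℓ → ℓ ≤ t →
      (∫ ω, (∑ i, Z i ω) ^ ℓ ∂μ) ^ (1 / (ℓ : ℝ))
        ≤ (ℓ : ℝ) * Real.sqrt (∑ i, σ i ^ 2) := by
  intro ℓ hℓ1 hℓt
  have hint_pow : ∀ i, ∀ k ≤ ℓ, Integrable (fun ω => Z i ω ^ k) μ := fun i k hk => by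
    rcases k.eq_zero_or_pos with rfl | hk0
    · simp
    · exact integrable_pow_of_integrable_abs_pow (hmeas i).aestronglyMeasurable
        (hint i k hk0 (hk.trans hℓt))
  have hvanish : ∀ α ∈ piAntidiag univ ℓ, (∃ i ∈ univ, Odd (α i)) →
      (Nat.multinomial univ α : ℝ) * ∏ i, ∫ ω, Z i ω ^ α i ∂μ = 0 := by
    rintro α hα ⟨i, -, hi⟩
    rw [prod_eq_zero (mem_univ i)
      (hodd i (α i) hi.pos ((apply_le_of_mem_piAntidiag hα i).trans hℓt) hi), mul_zero]
  suffices h : 0 ≤ ∫ ω, (∑ i, Z i ω) ^ ℓ ∂μ ∧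
      ∫ ω, (∑ i, Z i ω) ^ ℓ ∂μ ≤ ((ℓ : ℝ) * Real.sqrt (∑ i, σ i ^ 2)) ^ ℓ from
    (Real.rpow_one_div_natCast_le_iff h.1 (by positivity) (by omega)).2 h.2
  have hexp := hindep.integral_sum_pow hmeas ℓ hint_pow
  obtain ⟨k, rfl | rfl⟩ := Nat.even_or_odd' ℓ
  · refine ⟨integral_nonneg fun ω => (even_two_mul k).pow_nonneg _, ?_⟩
    rw [hexp, sum_piAntidiag_two_mul k hvanish, mul_pow, pow_mul (Real.sqrt _),
      Real.sq_sqrt (by positivity)]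
    refine sum_multinomial_two_nsmul_mul_prod_le univ k (fun i n => ∫ ω, Z i ω ^ n ∂μ) σ
      (fun i _ b => integral_nonneg fun ω => (even_two_mul b).pow_nonneg _) fun i _ b hb => ?_
    rcases b.eq_zero_or_pos with rfl | hb0
    · simp
    · exact integral_pow_le_of_rpow_le (even_two_mul b) (by omega)
        (hmom i _ (by omega) (by omega))
  · rw [hexp, sum_piAntidiag_eq_zero_of_odd (odd_two_mul_add_one k) hvanish]
    exact ⟨le_rfl, by positivity⟩

/-- Moment bound for sums of independent random variables with
vanishing odd moments and sub-exponential moment growth (Lemma `sum_subexp`). -/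
theorem sum_subexp_moment_bound
    {Ω : Type*} [MeasurableSpace Ω] (μ : Measure Ω) [IsProbabilityMeasure μ]
    (t m : ℕ) (ht : 1 ≤ t)
    (Z : Fin m → Ω → ℝ) (σ : Fin m → ℝ)
    (hσ : ∀ i, 0 ≤ σ i)
    (hmeas : ∀ i, Measurable (Z i))
    (hindep : iIndepFun Z μ)
    (hint : ∀ i, ∀ ℓ : ℕ, 1 ≤ ℓ → ℓ ≤ t → Integrable (fun ω => |Z i ω| ^ ℓ) μ)
    (hodd : ∀ i, ∀ ℓ : ℕ, 1 ≤ ℓ → ℓ ≤ t → Odd ℓ → ∫ ω, (Z i ω) ^ ℓ ∂μ = 0)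
    (hmom : ∀ i, ∀ ℓ : ℕ, 1 ≤ ℓ → ℓ ≤ t →
      (∫ ω, |Z i ω| ^ ℓ ∂μ) ^ (1 / (ℓ : ℝ)) ≤ (ℓ : ℝ) * σ i) :
    ∀ ℓ : ℕ, 1 ≤ ℓ → ℓ ≤ t →
      (∫ ω, (∑ i, Z i ω) ^ ℓ ∂μ) ^ (1 / (ℓ : ℝ))
        ≤ (ℓ : ℝ) * Real.sqrt (∑ i, σ i ^ 2) :=
  sum_subexp_moment_bound_general μ t m Z σ hmeas hindep hint hodd hmom
end

section
/- Let ρ be a positive semidefinite complex block matrix of the form ρ = [[A, B], [Bᴴ, C]], where A is a d₁ × d₁ matrix, C is a d₂ × d₂ matrix, and B is d₁ × d₂. Then Tr(A) · Tr(C) ≥ ‖B‖₁², where ‖B‖₁ = Tr(√(BᴴB)) denotes the trace norm of B. In particular, ‖B‖₁ ≤ Tr(ρ)/2. -/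
open Matrix ComplexOrder

/-- The trace norm (Schatten-1 norm) of a rectangular complex matrix:
`‖B‖₁ = Tr √(Bᴴ B)`, the sum of the singular values of `B`. -/
noncomputable def traceNorm {m n : Type*} [Fintype m] [Fintype n] [DecidableEq n]
    (B : Matrix m n ℂ) : ℝ :=
  (((Matrix.posSemidef_conjTranspose_mul_self B).1.eigenvectorUnitary : Matrix n n ℂ) *
    diagonal (((↑) : ℝ → ℂ) ∘ Real.sqrt ∘ (Matrix.posSemidef_conjTranspose_mul_self B).1.eigenvalues) *
    (star (Matrix.posSemidef_conjTranspose_mul_self B).1.eigenvectorUnitary : Matrix n n ℂ)).trace.re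

/-!
Let `V` diagonalize `Bᴴ B`, with singular values `sᵢ` of `B`, and let `U = B V diag(sᵢ⁻¹)`.
Then `Uᴴ B V = diag(sᵢ)`, whose trace is `‖B‖₁`, and `U Uᴴ` is an orthogonal projection.
Conjugating `ρ` by `diag(U, V)` keeps it positive semidefinite; the `2 × 2` principal minors
and Cauchy–Schwarz bound the square of the trace of its off-diagonal block by
`Tr(Uᴴ A U) · Tr(Vᴴ C V) ≤ Tr A · Tr C`. The bound by `Tr ρ / 2` is then AM–GM.
-/

namespace Matrix

variable {m n k l : Type*} [Fintype m] [Fintype n] [Fintype k] [Fintype l]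

lemma PosSemidef.re_trace_nonneg {A : Matrix n n ℂ} (hA : A.PosSemidef) : 0 ≤ A.trace.re :=
  (Complex.nonneg_iff.mp hA.trace_nonneg).1

lemma PosSemidef.fromBlocks_conj_blockDiagonal {A : Matrix m m ℂ} {B : Matrix m n ℂ}
    {C : Matrix n n ℂ} (hρ : (fromBlocks A B Bᴴ C).PosSemidef) (X : Matrix m k ℂ)
    (Y : Matrix n l ℂ) :
    (fromBlocks (Xᴴ * A * X) (Xᴴ * B * Y) (Xᴴ * B * Y)ᴴ (Yᴴ * C * Y)).PosSemidef := by
  have h := hρ.conjTranspose_mul_mul_same (fromBlocks X 0 0 Y)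
  simpa [fromBlocks_conjTranspose, fromBlocks_multiply, Matrix.mul_assoc] using h

lemma PosSemidef.re_dotProduct_fromBlocks_sq_le {A : Matrix m m ℂ} {B : Matrix m n ℂ}
    {C : Matrix n n ℂ} (hρ : (fromBlocks A B Bᴴ C).PosSemidef) (x : m → ℂ) (y : n → ℂ) :
    (star x ⬝ᵥ B *ᵥ y).re ^ 2 ≤ (star x ⬝ᵥ A *ᵥ x).re * (star y ⬝ᵥ C *ᵥ y).re := by
  have hconj : star y ⬝ᵥ Bᴴ *ᵥ x = star (star x ⬝ᵥ B *ᵥ y) := by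
    rw [star_dotProduct, star_mulVec, conjTranspose_conjTranspose, ← dotProduct_mulVec]
  have hquad : ∀ t : ℝ, 0 ≤ (star x ⬝ᵥ A *ᵥ x).re * (t * t) +
      (2 * (star x ⬝ᵥ B *ᵥ y).re) * t + (star y ⬝ᵥ C *ᵥ y).re := by
    intro t
    have h := hρ.re_dotProduct_nonneg (Sum.elim ((t : ℂ) • x) y)
    simp only [Function.star_sumElim, fromBlocks_mulVec, sumElim_dotProduct_sumElim,
      Sum.elim_comp_inl, Sum.elim_comp_inr, mulVec_smul, star_smul, dotProduct_add,
      smul_dotProduct, dotProduct_smul, hconj, Complex.star_def, Complex.conj_ofReal, smul_eq_mul,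
      map_add, RCLike.re_to_complex, Complex.re_ofReal_mul, Complex.conj_re] at h
    linarith
  have hd := discrim_le_zero hquad
  rw [discrim] at hd
  linarith

lemma PosSemidef.re_trace_sq_le_of_fromBlocks {A B C : Matrix n n ℂ}
    (hρ : (fromBlocks A B Bᴴ C).PosSemidef) :
    B.trace.re ^ 2 ≤ A.trace.re * C.trace.re := by
  classical
  simp only [trace, diag, Complex.re_sum]
  refine Finset.sum_sq_le_sum_mul_sum_of_sq_le_mul _
    (fun i _ => (Complex.nonneg_iff.mp (hρ.diag_nonneg (i := .inl i))).1)
    (fun i _ => (Complex.nonneg_iff.mp (hρ.diag_nonneg (i := .inr i))).1) fun i _ => ?_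
  simpa using hρ.re_dotProduct_fromBlocks_sq_le (Pi.single i 1) (Pi.single i 1)

lemma PosSemidef.re_trace_mul_le {A P : Matrix n n ℂ} (hA : A.PosSemidef)
    (hP : IsStarProjection P) : (A * P).trace.re ≤ A.trace.re := by
  classical
  have hQ := hP.one_sub
  have h := (hA.conjTranspose_mul_mul_same (1 - P)).re_trace_nonneg
  rw [show (1 - P)ᴴ = 1 - P from hQ.isSelfAdjoint, trace_mul_cycle, hQ.isIdempotentElem.eq,
    Matrix.sub_mul, Matrix.one_mul, trace_sub, trace_mul_comm, Complex.sub_re] at h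
  linarith

section OrthogonalColumns

/- Normalizing the orthogonal columns of `M` by their norms `s i` gives a partial isometry:
thanks to `0⁻¹ = 0`, zero columns stay zero. -/

variable [DecidableEq n] {M : Matrix m n ℂ} {s : n → ℝ}

lemma conjTranspose_mul_diagonal_inv_mul_self
    (hM : Mᴴ * M = diagonal fun i => ((s i ^ 2 : ℝ) : ℂ)) :
    (M * diagonal fun i => (s i : ℂ)⁻¹)ᴴ * M = diagonal fun i => (s i : ℂ) := by
  rw [conjTranspose_mul, diagonal_conjTranspose, Matrix.mul_assoc, hM, diagonal_mul_diagonal]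
  congr 1
  funext i
  rcases eq_or_ne (s i) 0 with hs | hs
  · simp [hs]
  · simp only [Pi.star_apply, star_inv₀, Complex.star_def, Complex.conj_ofReal]
    push_cast
    field_simp

lemma isStarProjection_mul_diagonal_inv_mul_conjTranspose
    (hM : Mᴴ * M = diagonal fun i => ((s i ^ 2 : ℝ) : ℂ)) :
    IsStarProjection ((M * diagonal fun i => (s i : ℂ)⁻¹) *
      (M * diagonal fun i => (s i : ℂ)⁻¹)ᴴ) := by
  set N := M * diagonal fun i => (s i : ℂ)⁻¹
  have hNN : Nᴴ * N = diagonal fun i => (s i : ℂ) * (s i : ℂ)⁻¹ := by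
    rw [show Nᴴ * N = Nᴴ * M * diagonal fun i => (s i : ℂ)⁻¹ from (Matrix.mul_assoc _ _ _).symm,
      conjTranspose_mul_diagonal_inv_mul_self hM, diagonal_mul_diagonal]
  have hN : N * (Nᴴ * N) = N := by
    rw [hNN, Matrix.mul_assoc, diagonal_mul_diagonal]
    congr 2
    funext i
    rcases eq_or_ne (s i) 0 with hs | hs
    · simp [hs]
    · field_simp
  refine ⟨?_, isHermitian_mul_conjTranspose_self N⟩
  show N * Nᴴ * (N * Nᴴ) = N * Nᴴ
  rw [Matrix.mul_assoc, ← Matrix.mul_assoc Nᴴ, ← Matrix.mul_assoc, hN]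

end OrthogonalColumns

lemma trace_fromBlocks {α : Type*} [AddCommMonoid α] (A : Matrix m m α) (B : Matrix m n α)
    (C : Matrix n m α) (D : Matrix n n α) : (fromBlocks A B C D).trace = A.trace + D.trace := by
  simp [trace, Fintype.sum_sum_type]

end Matrix

section TraceNorm

variable {m n : Type*} [Fintype m] [Fintype n] [DecidableEq n]

lemma traceNorm_eq_sum_sqrt_eigenvalues (B : Matrix m n ℂ) :
    traceNorm B = ∑ i, √((posSemidef_conjTranspose_mul_self B).1.eigenvalues i) := by
  rw [traceNorm, trace_mul_cycle, Unitary.coe_star_mul_self, Matrix.one_mul, trace_diagonal,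
    Complex.re_sum]
  simp

lemma conjTranspose_mul_self_mul_eigenvectorUnitary {B : Matrix m n ℂ}
    (hB : (Bᴴ * B).PosSemidef) :
    (B * (hB.1.eigenvectorUnitary : Matrix n n ℂ))ᴴ *
      (B * (hB.1.eigenvectorUnitary : Matrix n n ℂ)) =
      diagonal fun i => ((√(hB.1.eigenvalues i) ^ 2 : ℝ) : ℂ) := by
  have h := hB.1.conjStarAlgAut_star_eigenvectorUnitary
  rw [Unitary.conjStarAlgAut_star_apply] at h
  simp only [Real.sq_sqrt (hB.eigenvalues_nonneg _)]
  simp only [Matrix.mul_assoc] at h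
  rw [conjTranspose_mul, ← star_eq_conjTranspose, Matrix.mul_assoc, h]
  rfl

end TraceNorm

theorem trace_mul_trace_ge_traceNorm_sq_general
    {d₁ d₂ : Type*} [Fintype d₁] [Fintype d₂] [DecidableEq d₂]
    (A : Matrix d₁ d₁ ℂ) (B : Matrix d₁ d₂ ℂ) (C : Matrix d₂ d₂ ℂ)
    (hρ : (Matrix.fromBlocks A B Bᴴ C).PosSemidef) :
    traceNorm B ^ 2 ≤ A.trace.re * C.trace.re ∧
    traceNorm B ≤ (Matrix.fromBlocks A B Bᴴ C).trace.re / 2 := by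
  have hA : A.PosSemidef := hρ.submatrix Sum.inl
  have hC : C.PosSemidef := hρ.submatrix Sum.inr
  have hB := posSemidef_conjTranspose_mul_self B
  set V : Matrix d₂ d₂ ℂ := ↑hB.1.eigenvectorUnitary
  set s : d₂ → ℝ := fun i => √(hB.1.eigenvalues i)
  have hcols := conjTranspose_mul_self_mul_eigenvectorUnitary hB
  set U := B * V * diagonal fun i => (s i : ℂ)⁻¹
  have hUBV : Uᴴ * B * V = diagonal fun i => (s i : ℂ) := by
    rw [Matrix.mul_assoc]
    exact conjTranspose_mul_diagonal_inv_mul_self hcols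
  have hUAU : (Uᴴ * A * U).trace.re ≤ A.trace.re := by
    rw [trace_mul_cycle, trace_mul_comm]
    exact hA.re_trace_mul_le (isStarProjection_mul_diagonal_inv_mul_conjTranspose hcols)
  have hVCV : (Vᴴ * C * V).trace = C.trace := by
    rw [trace_mul_cycle, ← star_eq_conjTranspose,
      Unitary.mul_star_self_of_mem hB.1.eigenvectorUnitary.2, Matrix.one_mul]
  have hsq : traceNorm B ^ 2 ≤ A.trace.re * C.trace.re := by
    have h := (hρ.fromBlocks_conj_blockDiagonal U V).re_trace_sq_le_of_fromBlocks
    rw [hUBV, trace_diagonal, Complex.re_sum, hVCV] at h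
    rw [traceNorm_eq_sum_sqrt_eigenvalues]
    simp only [Complex.ofReal_re, s] at h
    exact h.trans (mul_le_mul_of_nonneg_right hUAU hC.re_trace_nonneg)
  refine ⟨hsq, ?_⟩
  rw [trace_fromBlocks, Complex.add_re]
  nlinarith [hA.re_trace_nonneg, hC.re_trace_nonneg, sq_nonneg (A.trace.re - C.trace.re)]

/-- For a positive semidefinite block matrix
`ρ = [[A, B], [Bᴴ, C]]` one has `Tr(A)·Tr(C) ≥ ‖B‖₁²`; in particular
`‖B‖₁ ≤ Tr(ρ)/2` (Fact `tracepsd`). -/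
theorem trace_mul_trace_ge_traceNorm_sq
    {d₁ d₂ : Type*} [Fintype d₁] [Fintype d₂] [DecidableEq d₁] [DecidableEq d₂]
    (A : Matrix d₁ d₁ ℂ) (B : Matrix d₁ d₂ ℂ) (C : Matrix d₂ d₂ ℂ)
    (hρ : (Matrix.fromBlocks A B Bᴴ C).PosSemidef) :
    traceNorm B ^ 2 ≤ A.trace.re * C.trace.re ∧
    traceNorm B ≤ (Matrix.fromBlocks A B Bᴴ C).trace.re / 2 :=
  trace_mul_trace_ge_traceNorm_sq_general A B C hρ
end

section
/- Let σ be a d × d diagonal density matrix with σ_{i₁ i₁} ≥ 3/4 for some index i₁, let i₂ ≠ i₁, fix 0 < ε ≤ 1/2, and for u ∈ {+1, −1} define σ^u as the matrix agreeing with σ except σ^u_{i₁ i₁} = σ_{i₁ i₁} − ε², σ^u_{i₂ i₂} = σ_{i₂ i₂} + ε², σ^u_{i₁ i₂} = σ^u_{i₂ i₁} = (ε/2)·u. Then for every vector v ∈ ℂ^d supported on the coordinates {i₁, i₂} with vᴴ σ v > 0, one has (vᴴ σ^{+1} v) · (vᴴ σ^{−1} v) ≥ (1 − 32ε²/9) ·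 (vᴴ σ v)². -/
/-!
Only the `2 × 2` block of rows and columns `{i₁, i₂}` matters. Writing `x = |v i₁|²`,
`y = |v i₂|²`, `R = Re (conj (v i₁) * v i₂)` and `L = λ₁ x + λ₂ y = vᴴ σ v`, the two perturbed
forms are `A ± ε R` with `A = L - ε² (x - y)`, so their product is `A² - ε² R² ≥ A² - ε² x y`
by Cauchy–Schwarz. The remaining inequality `32 L² / 9 - 2 (x - y) L - x y ≥ 0` holds because
`L ≥ 3 x / 4`.
-/

open Matrix ComplexOrder

namespace Matrix

variable {n : Type*} [Fintype n] [DecidableEq n]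

theorem star_dotProduct_mulVec_of_support_pair {i j : n} (hij : i ≠ j) (M : Matrix n n ℂ)
    {v : n → ℂ} (hv : ∀ k, k ≠ i → k ≠ j → v k = 0) :
    star v ⬝ᵥ M *ᵥ v =
      star (v i) * (M i i * v i + M i j * v j) + star (v j) * (M j i * v i + M j j * v j) := by
  have sum_pair : ∀ f : n → ℂ, (∀ k, k ≠ i → k ≠ j → f k = 0) → ∑ k, f k = f i + f j := by
    intro f hf
    rw [← Finset.sum_subset (Finset.subset_univ {i, j}), Finset.sum_pair hij]
    intro k _ hk
    simp only [Finset.mem_insert, Finset.mem_singleton, not_or] at hk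
    exact hf k hk.1 hk.2
  have mulVec_eq : ∀ k, (M *ᵥ v) k = M k i * v i + M k j * v j := fun k =>
    sum_pair _ fun l hli hlj => by simp [hv l hli hlj]
  rw [dotProduct, sum_pair _ fun k hki hkj => by simp [hv k hki hkj], mulVec_eq, mulVec_eq]
  rfl

theorem re_star_dotProduct_mulVec_of_support_pair {i j : n} (hij : i ≠ j)
    {M : Matrix n n ℂ} {p q r : ℝ} (hii : M i i = p) (hjj : M j j = q)
    (hij' : M i j = r) (hji : M j i = r)
    {v : n → ℂ} (hv : ∀ k, k ≠ i → k ≠ j → v k = 0) :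
    (star v ⬝ᵥ M *ᵥ v).re =
      p * Complex.normSq (v i) + q * Complex.normSq (v j) + 2 * r * (star (v i) * v j).re := by
  rw [star_dotProduct_mulVec_of_support_pair hij M hv, hii, hjj, hij', hji]
  simp only [Complex.add_re, Complex.add_im, Complex.mul_re, Complex.mul_im, Complex.ofReal_re,
    Complex.ofReal_im, Complex.star_def, Complex.conj_re, Complex.conj_im, Complex.normSq_apply]
  ring

end Matrix

theorem Complex.re_star_mul_sq_le_normSq_mul (z w : ℂ) :
    (star z * w).re ^ 2 ≤ Complex.normSq z * Complex.normSq w := by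
  rw [sq, ← Complex.normSq_conj z, ← Complex.normSq_mul]
  exact Complex.re_sq_le_normSq _

theorem corner_product_lower_bound {l₁ l₂ ε x y R : ℝ} (h₁ : 3 / 4 ≤ l₁) (h₂ : 0 ≤ l₂)
    (hx : 0 ≤ x) (hy : 0 ≤ y) (hR : R ^ 2 ≤ x * y) :
    (1 - 32 * ε ^ 2 / 9) * (l₁ * x + l₂ * y) ^ 2
      ≤ ((l₁ - ε ^ 2) * x + (l₂ + ε ^ 2) * y + ε * R)
        * ((l₁ - ε ^ 2) * x + (l₂ + ε ^ 2) * y - ε * R) := by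
  set L := l₁ * x + l₂ * y
  have hL : 3 / 4 * x ≤ L := by nlinarith
  have hcore : 0 ≤ 32 / 9 * L ^ 2 - 2 * (x - y) * L - x * y := by
    nlinarith [mul_nonneg hy (by linarith : 0 ≤ L - 3 / 4 * x),
      mul_nonneg (by linarith : 0 ≤ L) (by linarith : 0 ≤ L - 3 / 4 * x), mul_nonneg hx hy]
  have hε : 0 ≤ ε ^ 2 := sq_nonneg ε
  calc (1 - 32 * ε ^ 2 / 9) * L ^ 2
      ≤ (1 - 32 * ε ^ 2 / 9) * L ^ 2 + ε ^ 2 * (32 / 9 * L ^ 2 - 2 * (x - y) * L - x * y)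
          + (ε ^ 2 * (x - y)) ^ 2 + ε ^ 2 * (x * y - R ^ 2) := by
        linarith [mul_nonneg hε hcore, mul_nonneg hε (sub_nonneg.mpr hR),
          sq_nonneg (ε ^ 2 * (x - y))]
    _ = _ := by ring

theorem corner_likelihood_product_bound_general
    {d : ℕ} (lam : Fin d → ℝ) (hnn : ∀ i, 0 ≤ lam i)
    (i₁ i₂ : Fin d) (hne : i₂ ≠ i₁) (hbig : 3 / 4 ≤ lam i₁)
    (ε : ℝ)
    (σ σp σm : Matrix (Fin d) (Fin d) ℂ)
    (hσ : σ = Matrix.diagonal (fun i => (lam i : ℂ)))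
    (hσp : ∀ a b : Fin d, σp a b =
      if a = i₁ ∧ b = i₁ then ((lam i₁ - ε ^ 2 : ℝ) : ℂ)
      else if a = i₂ ∧ b = i₂ then ((lam i₂ + ε ^ 2 : ℝ) : ℂ)
      else if (a = i₁ ∧ b = i₂) ∨ (a = i₂ ∧ b = i₁) then ((ε / 2 : ℝ) : ℂ)
      else σ a b)
    (hσm : ∀ a b : Fin d, σm a b =
      if a = i₁ ∧ b = i₁ then ((lam i₁ - ε ^ 2 : ℝ) : ℂ)
      else if a = i₂ ∧ b = i₂ then ((lam i₂ + ε ^ 2 : ℝ) : ℂ)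
      else if (a = i₁ ∧ b = i₂) ∨ (a = i₂ ∧ b = i₁) then ((-(ε / 2) : ℝ) : ℂ)
      else σ a b)
    (v : Fin d → ℂ) (hsupp : ∀ i, i ≠ i₁ → i ≠ i₂ → v i = 0) :
    (1 - 32 * ε ^ 2 / 9) * ((star v ⬝ᵥ σ.mulVec v).re) ^ 2
      ≤ (star v ⬝ᵥ σp.mulVec v).re * (star v ⬝ᵥ σm.mulVec v).re := by
  have hne' : i₁ ≠ i₂ := hne.symm
  have form_of_block {M : Matrix (Fin d) (Fin d) ℂ} {p q r : ℝ} (hii : M i₁ i₁ = p)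
      (hjj : M i₂ i₂ = q) (hij : M i₁ i₂ = r) (hji : M i₂ i₁ = r) :=
    re_star_dotProduct_mulVec_of_support_pair hne' hii hjj hij hji hsupp
  rw [form_of_block (M := σ) (p := lam i₁) (q := lam i₂) (r := 0) (by simp [hσ])
      (by simp [hσ]) (by simp [hσ, hne']) (by simp [hσ, hne]),
    form_of_block (M := σp) (p := lam i₁ - ε ^ 2) (q := lam i₂ + ε ^ 2) (r := ε / 2)
      (by simp [hσp]) (by simp [hσp, hne]) (by simp [hσp, hne, hne'])
      (by simp [hσp, hne, hne']),
    form_of_block (M := σm) (p := lam i₁ - ε ^ 2) (q := lam i₂ + ε ^ 2) (r := -(ε / 2))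
      (by simp [hσm]) (by simp [hσm, hne]) (by simp [hσm, hne, hne'])
      (by simp [hσm, hne, hne'])]
  convert corner_product_lower_bound (ε := ε) hbig (hnn i₂) (Complex.normSq_nonneg _)
    (Complex.normSq_nonneg _) (Complex.re_star_mul_sq_le_normSq_mul (v i₁) (v i₂)) using 1 <;> ring

/-- (Key estimate in Lemma `corner`.) With `σ` a diagonal density
matrix whose `i₁`-th entry is at least `3/4`, and `σ^{±1}` the corner
perturbations, for every vector `v` supported on `{i₁, i₂}` with `vᴴ σ v > 0`,
`(vᴴ σ^{+1} v)(vᴴ σ^{−1} v) ≥ (1 − 32ε²/9)(vᴴ σ v)²`. -/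
theorem corner_likelihood_product_bound
    {d : ℕ} (lam : Fin d → ℝ) (hnn : ∀ i, 0 ≤ lam i) (hsum1 : ∑ i, lam i = 1)
    (i₁ i₂ : Fin d) (hne : i₂ ≠ i₁) (hbig : 3 / 4 ≤ lam i₁)
    (ε : ℝ) (hε : 0 < ε) (hεle : ε ≤ 1 / 2)
    (σ σp σm : Matrix (Fin d) (Fin d) ℂ)
    (hσ : σ = Matrix.diagonal (fun i => (lam i : ℂ)))
    (hσp : ∀ a b : Fin d, σp a b =
      if a = i₁ ∧ b = i₁ then ((lam i₁ - ε ^ 2 : ℝ) : ℂ)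
      else if a = i₂ ∧ b = i₂ then ((lam i₂ + ε ^ 2 : ℝ) : ℂ)
      else if (a = i₁ ∧ b = i₂) ∨ (a = i₂ ∧ b = i₁) then ((ε / 2 : ℝ) : ℂ)
      else σ a b)
    (hσm : ∀ a b : Fin d, σm a b =
      if a = i₁ ∧ b = i₁ then ((lam i₁ - ε ^ 2 : ℝ) : ℂ)
      else if a = i₂ ∧ b = i₂ then ((lam i₂ + ε ^ 2 : ℝ) : ℂ)
      else if (a = i₁ ∧ b = i₂) ∨ (a = i₂ ∧ b = i₁) then ((-(ε / 2) : ℝ) : ℂ)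
      else σ a b)
    (v : Fin d → ℂ) (hsupp : ∀ i, i ≠ i₁ → i ≠ i₂ → v i = 0)
    (hpos : 0 < (star v ⬝ᵥ σ.mulVec v).re) :
    (1 - 32 * ε ^ 2 / 9) * ((star v ⬝ᵥ σ.mulVec v).re) ^ 2
      ≤ (star v ⬝ᵥ σp.mulVec v).re * (star v ⬝ᵥ σm.mulVec v).re :=
  corner_likelihood_product_bound_general lam hnn i₁ i₂ hne hbig ε σ σp σm hσ hσp hσm v hsupp
end

section
/- Let X_1, ..., X_t be real-valued random variables on a common probability space (not necessarily independent) such that for every i: |X_i| ≤ 1/2 almost surely, E[X_i] = 0, and E[X_i²] ≤ ς² for some ς ≥ 0. Then E[ ∏_{i=1}^{t} (1 + X_i) ] ≥ exp(−ς² · t). -/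
/-!
Since `log (1 + x) ≥ x - x ^ 2` for `|x| ≤ 1/2`, the product `∏ᵢ (1 + Xᵢ)` dominates
`exp S` with `S = ∑ᵢ (Xᵢ - Xᵢ ^ 2)`. By Jensen, `E[exp S] ≥ exp E[S]`, and
`E[S] = -∑ᵢ E[Xᵢ ^ 2] ≥ -ς ^ 2 t` because the `Xᵢ` are centred. Dependence between the `Xᵢ`
plays no role: only linearity of expectation is used.
-/

open MeasureTheory

namespace Real

theorem sub_sq_le_log_one_add {x : ℝ} (hx : |x| ≤ 1 / 2) : x - x ^ 2 ≤ log (1 + x) := by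
  obtain ⟨hx₁, hx₂⟩ := abs_le.1 hx
  rcases le_or_gt 0 x with hx₀ | hx₀
  · calc x - x ^ 2 ≤ 2 * x / (x + 2) := by
          rw [le_div_iff₀ (by linarith)]; nlinarith [sq_nonneg x, pow_nonneg hx₀ 3]
      _ ≤ log (1 + x) := le_log_one_add_of_nonneg hx₀
  · -- for negative `x`, the quadratic lower bound of `exp (x ^ 2 - x)` already exceeds `1 / (1 + x)`
    have hz : 0 ≤ x ^ 2 - x := by nlinarith
    have hquad := quadratic_le_exp_of_nonneg hz
    have : (1 + x)⁻¹ ≤ exp (x ^ 2 - x) := by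
      rw [inv_le_iff_one_le_mul₀ (by linarith)]
      nlinarith [mul_le_mul_of_nonneg_right hquad (by linarith : (0 : ℝ) ≤ 1 + x)]
    have := (log_le_iff_le_exp (inv_pos.2 (by linarith))).2 this
    rw [log_inv] at this
    linarith

end Real

theorem MeasureTheory.integrable_finset_prod_of_memLp_top {ι α : Type*} [MeasurableSpace α]
    {μ : Measure α} [IsFiniteMeasure μ] {s : Finset ι} {f : ι → α → ℝ}
    (hf : ∀ i ∈ s, MemLp (f i) ⊤ μ) : Integrable (fun x => ∏ i ∈ s, f i x) μ := by
  have := MemLp.prod' (p := fun _ => ⊤) hf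
  simp only [ENNReal.inv_top, Finset.sum_const_zero, ENNReal.inv_zero] at this
  exact this.integrable le_top

theorem MeasureTheory.exp_integral_le_integral_of_exp_le {α : Type*} [MeasurableSpace α]
    {μ : Measure α} [IsProbabilityMeasure μ] {f g : α → ℝ} (hf : Integrable f μ)
    (hg : Integrable g μ) (hfg : ∀ᵐ x ∂μ, Real.exp (f x) ≤ g x) :
    Real.exp (∫ x, f x ∂μ) ≤ ∫ x, g x ∂μ := by
  have hexp : Integrable (fun x => Real.exp (f x)) μ :=
    hg.mono (Real.continuous_exp.comp_aestronglyMeasurable hf.1) <| hfg.mono fun x hx => by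
      simpa [abs_of_pos (Real.exp_pos _)] using hx.trans (le_abs_self _)
  calc Real.exp (∫ x, f x ∂μ) ≤ ∫ x, Real.exp (f x) ∂μ :=
        convexOn_exp.map_integral_le Real.continuous_exp.continuousOn isClosed_univ
          (.of_forall fun _ => Set.mem_univ _) hf hexp
    _ ≤ ∫ x, g x ∂μ := integral_mono_ae hexp hg hfg

theorem product_likelihood_lower_bound_general
    {Ω : Type*} [MeasurableSpace Ω] (μ : Measure Ω) [IsProbabilityMeasure μ]
    (t : ℕ) (X : Fin t → Ω → ℝ) (ς : ℝ)
    (hmeas : ∀ i, Measurable (X i))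
    (hbdd : ∀ i, ∀ᵐ ω ∂μ, |X i ω| ≤ 1 / 2)
    (hmean : ∀ i, ∫ ω, X i ω ∂μ = 0)
    (hvar : ∀ i, ∫ ω, (X i ω) ^ 2 ∂μ ≤ ς ^ 2) :
    Real.exp (-ς ^ 2 * t) ≤ ∫ ω, ∏ i, (1 + X i ω) ∂μ := by
  have hX : ∀ i, MemLp (X i) ⊤ μ := fun i =>
    memLp_top_of_bound (hmeas i).aestronglyMeasurable (1 / 2) (hbdd i)
  have hX₁ : ∀ i, Integrable (X i) μ := fun i => (hX i).integrable le_top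
  have hX₂ : ∀ i, Integrable (fun ω => X i ω ^ 2) μ := fun i =>
    ((hX i).mono_exponent le_top).integrable_sq
  have hprod : Integrable (fun ω => ∏ i, (1 + X i ω)) μ :=
    integrable_finset_prod_of_memLp_top fun i _ => (memLp_top_const (1 : ℝ)).add (hX i)
  have hterm : ∀ i, Integrable (fun ω => X i ω - X i ω ^ 2) μ := fun i => (hX₁ i).sub (hX₂ i)
  have hdrift : -ς ^ 2 * t ≤ ∫ ω, ∑ i, (X i ω - X i ω ^ 2) ∂μ := by
    rw [integral_finsetSum _ fun i _ => hterm i]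
    calc -ς ^ 2 * t = ∑ _i : Fin t, -ς ^ 2 := by simp [mul_comm]
      _ ≤ _ := Finset.sum_le_sum fun i _ => by
        rw [integral_sub (hX₁ i) (hX₂ i), hmean i]; linarith [hvar i]
  have hpointwise : ∀ᵐ ω ∂μ, Real.exp (∑ i, (X i ω - X i ω ^ 2)) ≤ ∏ i, (1 + X i ω) := by
    filter_upwards [ae_all_iff.2 hbdd] with ω hω
    rw [Real.exp_sum]
    refine Finset.prod_le_prod (fun _ _ => (Real.exp_pos _).le) fun i _ => ?_
    exact (Real.le_log_iff_exp_le (by linarith [(abs_le.1 (hω i)).1])).1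
      (Real.sub_sq_le_log_one_add (hω i))
  calc Real.exp (-ς ^ 2 * t) ≤ Real.exp (∫ ω, ∑ i, (X i ω - X i ω ^ 2) ∂μ) :=
        Real.exp_le_exp.2 hdrift
    _ ≤ ∫ ω, ∏ i, (1 + X i ω) ∂μ :=
        exp_integral_le_integral_of_exp_le (integrable_finsetSum _ fun i _ => hterm i)
          hprod hpointwise

/-- (Abstract content of Lemma `symimpliesDelta`.) If
`X_1, …, X_t` are (not necessarily independent) random variables with
`|X_i| ≤ 1/2` a.s., `E[X_i] = 0` and `E[X_i²] ≤ ς²`, then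
`E[∏_i (1 + X_i)] ≥ exp(−ς² t)`. -/
theorem product_likelihood_lower_bound
    {Ω : Type*} [MeasurableSpace Ω] (μ : Measure Ω) [IsProbabilityMeasure μ]
    (t : ℕ) (X : Fin t → Ω → ℝ) (ς : ℝ) (hς : 0 ≤ ς)
    (hmeas : ∀ i, Measurable (X i))
    (hbdd : ∀ i, ∀ᵐ ω ∂μ, |X i ω| ≤ 1 / 2)
    (hmean : ∀ i, ∫ ω, X i ω ∂μ = 0)
    (hvar : ∀ i, ∫ ω, (X i ω) ^ 2 ∂μ ≤ ς ^ 2) :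
    Real.exp (-ς ^ 2 * t) ≤ ∫ ω, ∏ i, (1 + X i ω) ∂μ :=
  product_likelihood_lower_bound_general μ t X ς hmeas hbdd hmean hvar
end
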